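/- If T is a densely defined operator in a complex Hilbert space H that is C-symmetric with respect to a conjugation C (i.e., T ⊆ CT*C), and for some k ∈ ℕ the power T^k is densely defined, then T^k is C-symmetric, i.e., T^k ⊆ C(T^k)*C. -/

import Mathlib

open InnerProductSpace in
/-- A conjugation on a complex inner product space: an antilinear involution
satisfying `⟪Cf, Cg⟫ = ⟪g, f⟫`. -/
structure Conjugation (H : Type*) [NormedAddCommGroup H] [InnerProductSpace ℂ H] where
  toFun : H → H
  map_add' : ∀ x y, toFun (x + y) = toFun x + toFun y
  map_smul' : ∀ (c : ℂ) (x : H), toFun (c • x) = (starRingEnd ℂ c) • toFun x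
  invol : ∀ x, toFun (toFun x) = x
  inner_map : ∀ x y, (inner ℂ (toFun x) (toFun y) : ℂ) = inner ℂ y x

/-- `T` is `C`-symmetric: `T ⊆ C T* C`. -/
noncomputable def CSymmetric {H : Type*} [NormedAddCommGroup H] [InnerProductSpace ℂ H]
    [CompleteSpace H] (C : Conjugation H) (T : H →ₗ.[ℂ] H) : Prop :=
  ∀ x : T.domain, ∃ hx : C.toFun x ∈ T.adjoint.domain,
    C.toFun (T.adjoint ⟨C.toFun x, hx⟩) = T x

/-- `T` is `C`-selfadjoint: `T = C T* C`. -/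
noncomputable def CSelfAdjoint {H : Type*} [NormedAddCommGroup H] [InnerProductSpace ℂ H]
    [CompleteSpace H] (C : Conjugation H) (T : H →ₗ.[ℂ] H) : Prop :=
  CSymmetric C T ∧ ∀ y : H, C.toFun y ∈ T.adjoint.domain → y ∈ T.domain

/-- Composition of partially defined linear maps, with its natural (maximal) domain. -/
noncomputable def LinearPMap.pcomp {R E F G : Type*} [Ring R] [AddCommGroup E] [Module R E]
    [AddCommGroup F] [Module R F] [AddCommGroup G] [Module R G]
    (g : F →ₗ.[R] G) (f : E →ₗ.[R] F) : E →ₗ.[R] G :=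
  g.comp (f.domRestrict ((g.domain.comap f.toFun).map f.domain.subtype))
    (by
      intro x
      obtain ⟨y, hy, hyx⟩ := (Submodule.mem_inf.mp x.2).1
      have h := LinearPMap.domRestrict_apply (f := f) (x := x) (y := y) (by exact hyx.symm)
      exact h ▸ hy)

/-- Natural powers of a partially defined linear map, `T^(n+1) = T ∘ T^n`, with
`T^0` the identity on the whole space. -/
noncomputable def LinearPMap.ppow {R E : Type*} [Ring R] [AddCommGroup E] [Module R E]
    (T : E →ₗ.[R] E) : ℕ → E →ₗ.[R] E
  | 0 => ⟨⊤, (⊤ : Submodule R E).subtype⟩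
  | n + 1 => T.pcomp (T.ppow n)

/-
For densely defined `T`, `C`-symmetry is the identity `⟪C (T x), y⟫ = ⟪C x, T y⟫` on the domain
of `T`: it says exactly that `C x` lies in the domain of `T*` with `T* (C x) = C (T x)`. This
symmetry with respect to the pairing `(x, y) ↦ ⟪C x, y⟫` passes to powers by moving one factor
of `T` at a time from left to right.
-/

namespace LinearPMap

variable {R E F G : Type*} [Ring R] [AddCommGroup E] [Module R E]
    [AddCommGroup F] [Module R F] [AddCommGroup G] [Module R G]

theorem apply_eq_of_coe_eq (f : E →ₗ.[R] F) {a b : f.domain} (h : (a : E) = b) :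
    f a = f b :=
  congr_arg f (Subtype.ext h)

theorem mem_pcomp_domain_iff (g : F →ₗ.[R] G) (f : E →ₗ.[R] F) {x : E} :
    x ∈ (g.pcomp f).domain ↔ ∃ hx : x ∈ f.domain, f ⟨x, hx⟩ ∈ g.domain := by
  constructor
  · rintro ⟨⟨y, hy, hyx⟩, hx⟩
    exact ⟨hx, f.apply_eq_of_coe_eq (a := y) (b := ⟨x, hx⟩) hyx ▸ hy⟩
  · rintro ⟨hx, hfx⟩
    exact ⟨⟨⟨x, hx⟩, hfx, rfl⟩, hx⟩

theorem pcomp_apply (g : F →ₗ.[R] G) (f : E →ₗ.[R] F) {x : E}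
    (h : x ∈ (g.pcomp f).domain) (hx : x ∈ f.domain) (hfx : f ⟨x, hx⟩ ∈ g.domain) :
    g.pcomp f ⟨x, h⟩ = g ⟨f ⟨x, hx⟩, hfx⟩ :=
  g.apply_eq_of_coe_eq (domRestrict_apply rfl)

theorem mem_ppow_succ_domain_iff (T : E →ₗ.[R] E) (k : ℕ) {x : E} :
    x ∈ (T.ppow (k + 1)).domain ↔ ∃ hx : x ∈ (T.ppow k).domain, T.ppow k ⟨x, hx⟩ ∈ T.domain :=
  mem_pcomp_domain_iff T (T.ppow k)

theorem ppow_succ_apply (T : E →ₗ.[R] E) (k : ℕ) {x : E} (h : x ∈ (T.ppow (k + 1)).domain)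
    (hx : x ∈ (T.ppow k).domain) (hTx : T.ppow k ⟨x, hx⟩ ∈ T.domain) :
    T.ppow (k + 1) ⟨x, h⟩ = T ⟨T.ppow k ⟨x, hx⟩, hTx⟩ :=
  pcomp_apply T (T.ppow k) h hx hTx

theorem ppow_succ_apply' (T : E →ₗ.[R] E) (k : ℕ) {x : E} (h : x ∈ (T.ppow (k + 1)).domain) :
    ∃ (hx : x ∈ T.domain) (hTx : T ⟨x, hx⟩ ∈ (T.ppow k).domain),
      T.ppow (k + 1) ⟨x, h⟩ = T.ppow k ⟨T ⟨x, hx⟩, hTx⟩ := by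
  induction k generalizing x with
  | zero =>
    obtain ⟨hx, hTx⟩ := (T.mem_ppow_succ_domain_iff 0).1 h
    exact ⟨hTx, Submodule.mem_top, T.ppow_succ_apply 0 h hx hTx⟩
  | succ k ih =>
    obtain ⟨hx, hTkx⟩ := (T.mem_ppow_succ_domain_iff (k + 1)).1 h
    obtain ⟨hx₁, hTx, hshift⟩ := ih hx
    have hTkTx : T.ppow k ⟨T ⟨x, hx₁⟩, hTx⟩ ∈ T.domain := hshift ▸ hTkx
    have hTx' : T ⟨x, hx₁⟩ ∈ (T.ppow (k + 1)).domain :=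
      (T.mem_ppow_succ_domain_iff k).2 ⟨hTx, hTkTx⟩
    refine ⟨hx₁, hTx', ?_⟩
    rw [T.ppow_succ_apply (k + 1) h hx hTkx, T.ppow_succ_apply k hTx' hTx hTkTx]
    exact T.apply_eq_of_coe_eq hshift

def IsSymmetricFor {S : Type*} (B : E → E → S) (T : E →ₗ.[R] E) : Prop :=
  ∀ x y : T.domain, B (T x) y = B x (T y)

theorem IsSymmetricFor.ppow {S : Type*} {B : E → E → S} {T : E →ₗ.[R] E}
    (hT : IsSymmetricFor B T) (k : ℕ) : IsSymmetricFor B (T.ppow k) := by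
  induction k with
  | zero => intro x y; rfl
  | succ k ih =>
    rintro ⟨x, hx⟩ ⟨y, hy⟩
    obtain ⟨hx₁, hTx, hxshift⟩ := T.ppow_succ_apply' k hx
    obtain ⟨hyk, hTky⟩ := (T.mem_ppow_succ_domain_iff k).1 hy
    calc B (T.ppow (k + 1) ⟨x, hx⟩) y
        = B (T.ppow k ⟨T ⟨x, hx₁⟩, hTx⟩) y := by rw [hxshift]
      _ = B (T ⟨x, hx₁⟩) (T.ppow k ⟨y, hyk⟩) := ih ⟨_, hTx⟩ ⟨y, hyk⟩
      _ = B x (T ⟨T.ppow k ⟨y, hyk⟩, hTky⟩) := hT ⟨x, hx₁⟩ ⟨_, hTky⟩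
      _ = B x (T.ppow (k + 1) ⟨y, hy⟩) := by rw [T.ppow_succ_apply k hy hyk hTky]

end LinearPMap

theorem cSymmetric_iff_isSymmetricFor {H : Type*} [NormedAddCommGroup H]
    [InnerProductSpace ℂ H] [CompleteSpace H] {C : Conjugation H} {T : H →ₗ.[ℂ] H}
    (hdense : Dense (T.domain : Set H)) :
    CSymmetric C T ↔ T.IsSymmetricFor (fun x y => inner ℂ (C.toFun x) y) := by
  constructor
  · intro hsym x y
    obtain ⟨hx, hCx⟩ := hsym x
    have hadj : T.adjoint ⟨C.toFun x, hx⟩ = C.toFun (T x) := by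
      rw [← hCx, C.invol]
    simpa only [hadj] using T.adjoint_isFormalAdjoint hdense ⟨C.toFun x, hx⟩ y
  · intro hB x
    have hx : C.toFun x ∈ T.adjoint.domain :=
      T.mem_adjoint_domain_of_exists _ ⟨C.toFun (T x), hB x⟩
    refine ⟨hx, ?_⟩
    rw [T.adjoint_apply_eq hdense _ (hB x), C.invol]

/-- If `T` is densely defined and `C`-symmetric and `T^k` is densely
defined, then `T^k` is `C`-symmetric. -/
theorem stmt_0 {H : Type*} [NormedAddCommGroup H] [InnerProductSpace ℂ H] [CompleteSpace H]
    (C : Conjugation H) (T : H →ₗ.[ℂ] H)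
    (hdense : Dense (T.domain : Set H)) (hsym : CSymmetric C T)
    (k : ℕ) (hkdense : Dense ((T.ppow k).domain : Set H)) :
    CSymmetric C (T.ppow k) :=
  (cSymmetric_iff_isSymmetricFor hkdense).2
    (((cSymmetric_iff_isSymmetricFor hdense).1 hsym).ppow k)
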